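/- arXiv:1405.3540 — 3 statements merged into one kernel-verified Lean document; each statement's English description precedes it below -/
import Mathlib

section
/- Let q ≥ 1 and define h : ℝ^q → ℝ^q by h(a) = (6|a|⁴ − 15|a|³ + 10|a|²) a for |a| ≤ 1 and h(a) = a/|a| for |a| > 1. Then h is a C² function on ℝ^q and h(ℝ^q) equals the closed unit ball of ℝ^q; moreover h restricted to the open unit ball is a surjection onto the open unit ball. -/
/-!
Write `r = ‖a‖`. On the closed unit ball `‖h(a)‖ = s(r)` with `s(r) = 6r⁵ - 15r⁴ + 10r³` the
"smootherstep" polynomial, and since `1 - s(r) = (1 - r)³ (6r² + 3r + 1)`, the profile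
`s(min r 1) = 1 - max (1 - r) 0 ^ 3 * (6r² + 3r + 1)` is `C²` in `r`. Hence away from the origin
`h(a) = (s(min ‖a‖ 1) / ‖a‖) • a` is `C²`, the norm being smooth there. Near the origin
`h(a) = (6‖a‖⁴ + 10‖a‖²) • a - 15 ‖a‖³ • a`, and `a ↦ ‖a‖³ • a` is `C²` because its derivative
`‖a‖³ • id + 3 ⟪a, ·⟫ ‖a‖ • a` is built from the `C¹` maps `‖a‖³` and `‖a‖ • a`.
The range statements follow from `‖h(a)‖ = s(min ‖a‖ 1)`, the intermediate value theorem for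
`s` on `[0, 1]`, and `s < 1` on `[0, 1)`.
-/

/-- The map `h : ℝ^q → ℝ^q`, `h(a) = (6|a|⁴ − 15|a|³ + 10|a|²) a` for `|a| ≤ 1`,
`h(a) = a/|a|` for `|a| > 1`. -/
noncomputable def hmap (q : ℕ) :
    EuclideanSpace ℝ (Fin q) → EuclideanSpace ℝ (Fin q) :=
  fun a => if ‖a‖ ≤ 1 then (6 * ‖a‖ ^ 4 - 15 * ‖a‖ ^ 3 + 10 * ‖a‖ ^ 2) • a else ‖a‖⁻¹ • a

open Filter Topology Set Metric

section NormSmulSelf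

variable {E : Type*} [NormedAddCommGroup E] [InnerProductSpace ℝ E]

theorem hasFDerivAt_norm_of_ne_zero {x : E} (hx : x ≠ 0) :
    HasFDerivAt (fun y : E => ‖y‖) (‖x‖⁻¹ • innerSL ℝ x) x := by
  have h := (hasStrictFDerivAt_norm_sq x).hasFDerivAt.sqrt (by positivity)
  simp only [Real.sqrt_sq (norm_nonneg _)] at h
  convert h using 1
  ext v
  simp only [smul_apply, coe_innerSL_apply, smul_eq_mul, one_div, mul_inv_rev, nsmul_eq_mul,
    Nat.cast_ofNat]
  field_simp

theorem hasFDerivAt_norm_smul_self (x : E) :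
    HasFDerivAt (fun y : E => ‖y‖ • y)
      (‖x‖ • ContinuousLinearMap.id ℝ E + (‖x‖⁻¹ • innerSL ℝ x).smulRight x) x := by
  rcases eq_or_ne x 0 with rfl | hx
  · have hsmall : (fun y : E => ‖y‖) =o[𝓝 0] (fun _ => (1 : ℝ)) :=
      (Asymptotics.isLittleO_one_iff ℝ).2 (by simpa using (continuous_norm (E := E)).tendsto 0)
    simpa [hasFDerivAt_iff_isLittleO_nhds_zero] using
      hsmall.smul_isBigO (Asymptotics.isBigO_refl (fun y : E => y) (𝓝 0))
  · exact (hasFDerivAt_norm_of_ne_zero hx).smul (hasFDerivAt_id x)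

theorem norm_inv_norm_smul_innerSL_smulRight_le (x : E) :
    ‖(‖x‖⁻¹ • innerSL ℝ x).smulRight x‖ ≤ ‖x‖ := by
  rcases eq_or_ne x 0 with rfl | hx
  · simp
  · rw [ContinuousLinearMap.norm_smulRight_apply, norm_smul, innerSL_apply_norm, norm_inv,
      norm_norm, inv_mul_cancel₀ (norm_ne_zero_iff.2 hx), one_mul]

theorem continuous_inv_norm_smul_innerSL_smulRight :
    Continuous fun x : E => (‖x‖⁻¹ • innerSL ℝ x).smulRight x := by
  refine continuous_iff_continuousAt.2 fun x => ?_
  rcases eq_or_ne x 0 with rfl | hx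
  · have := squeeze_zero_norm norm_inv_norm_smul_innerSL_smulRight_le
      ((continuous_norm (E := E)).tendsto' 0 0 norm_zero)
    simpa [ContinuousAt] using this
  · have : ContDiffAt ℝ 0 (fun x : E => (‖x‖⁻¹ • innerSL ℝ x).smulRight x) x :=
      (((contDiffAt_norm ℝ hx).inv (norm_ne_zero_iff.2 hx)).smul
        (innerSL ℝ).contDiff.contDiffAt).smulRight contDiffAt_id
    exact this.continuousAt

theorem contDiff_norm_smul_self : ContDiff ℝ 1 fun x : E => ‖x‖ • x :=
  contDiff_one_iff_hasFDerivAt.2 ⟨_, (continuous_norm.smul continuous_const).add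
    continuous_inv_norm_smul_innerSL_smulRight, hasFDerivAt_norm_smul_self⟩

theorem hasFDerivAt_norm_pow_three_smul_self (x : E) :
    HasFDerivAt (fun y : E => ‖y‖ ^ 3 • y)
      (‖x‖ ^ 3 • ContinuousLinearMap.id ℝ E + (innerSL ℝ x).smulRight ((3 : ℝ) • ‖x‖ • x)) x := by
  have h := (hasFDerivAt_norm_rpow x (p := 3) (by norm_num)).smul (hasFDerivAt_id x)
  simp only [Real.rpow_ofNat, show (3 : ℝ) - 2 = 1 by norm_num, Real.rpow_one, id_eq] at h
  convert h using 1
  · rfl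
  · congr 1
    ext v
    simp only [ContinuousLinearMap.smulRight_apply, FunLike.coe_smul, Pi.smul_apply,
      innerSL_apply_apply, smul_smul, smul_eq_mul]
    ring_nf

theorem contDiff_norm_pow_three_smul_self : ContDiff ℝ 2 fun x : E => ‖x‖ ^ 3 • x := by
  have hcube : ContDiff ℝ 1 fun x : E => ‖x‖ ^ 3 := by
    simpa using contDiff_norm_rpow (E := E) (p := 3) (by norm_num)
  refine contDiff_succ_iff_hasFDerivAt (n := 1).2
    ⟨_, ?_, hasFDerivAt_norm_pow_three_smul_self⟩
  exact (hcube.smul contDiff_const).add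
    ((innerSL ℝ).contDiff.smulRight (contDiff_const.smul contDiff_norm_smul_self))

end NormSmulSelf

theorem hasDerivAt_max_zero_pow (k : ℕ) (t : ℝ) :
    HasDerivAt (fun s : ℝ => max s 0 ^ (k + 2)) ((k + 2) * max t 0 ^ (k + 1)) t := by
  refine hasDerivAt_of_hasDerivAt_of_ne' (x := 0)
    (g := fun s : ℝ => (k + 2) * max s 0 ^ (k + 1)) (fun y hy => ?_) (by fun_prop) (by fun_prop) t
  rcases hy.lt_or_gt with hy | hy
  · have hzero : (fun s : ℝ => max s 0 ^ (k + 2)) =ᶠ[𝓝 y] fun _ => 0 := by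
      filter_upwards [Iio_mem_nhds hy] with s hs
      simp [max_eq_right (mem_Iio.1 hs).le]
    simpa [max_eq_right hy.le] using (hasDerivAt_const y (0 : ℝ)).congr_of_eventuallyEq hzero
  · have hpow : (fun s : ℝ => max s 0 ^ (k + 2)) =ᶠ[𝓝 y] fun s => s ^ (k + 2) := by
      filter_upwards [Ioi_mem_nhds hy] with s hs
      rw [max_eq_left (mem_Ioi.1 hs).le]
    simpa [max_eq_left hy.le] using (hasDerivAt_pow (k + 2) y).congr_of_eventuallyEq hpow

theorem contDiff_max_zero_pow (n : ℕ) : ContDiff ℝ n fun t : ℝ => max t 0 ^ (n + 1) := by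
  induction n with
  | zero => simpa using (continuous_id.max continuous_const)
  | succ n ih =>
    rw [Nat.cast_succ, contDiff_succ_iff_deriv]
    refine ⟨fun t => (hasDerivAt_max_zero_pow n t).differentiableAt, by simp, ?_⟩
    rw [funext fun t => (hasDerivAt_max_zero_pow n t).deriv]
    exact contDiff_const.mul ih

def smootherstep (r : ℝ) : ℝ := 6 * r ^ 5 - 15 * r ^ 4 + 10 * r ^ 3

theorem one_sub_smootherstep (r : ℝ) :
    1 - smootherstep r = (1 - r) ^ 3 * (6 * r ^ 2 + 3 * r + 1) := by
  unfold smootherstep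
  ring

theorem smootherstep_zero : smootherstep 0 = 0 := by norm_num [smootherstep]

theorem smootherstep_one : smootherstep 1 = 1 := by norm_num [smootherstep]

theorem continuous_smootherstep : Continuous smootherstep := by
  unfold smootherstep
  fun_prop

theorem smootherstep_nonneg {r : ℝ} (hr : 0 ≤ r) : 0 ≤ smootherstep r := by
  have hfactor : smootherstep r = r ^ 3 * (6 * (r - 5 / 4) ^ 2 + 5 / 8) := by
    unfold smootherstep
    ring
  rw [hfactor]
  positivity

theorem smootherstep_le_one {r : ℝ} (hr : r ≤ 1) : smootherstep r ≤ 1 := by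
  have hq : 0 < 6 * r ^ 2 + 3 * r + 1 := by nlinarith [sq_nonneg (4 * r + 1)]
  have := mul_nonneg (pow_nonneg (sub_nonneg.2 hr) 3) hq.le
  linarith [one_sub_smootherstep r]

theorem smootherstep_lt_one {r : ℝ} (hr : r < 1) : smootherstep r < 1 := by
  have hq : 0 < 6 * r ^ 2 + 3 * r + 1 := by nlinarith [sq_nonneg (4 * r + 1)]
  have := mul_pos (pow_pos (sub_pos.2 hr) 3) hq
  linarith [one_sub_smootherstep r]

theorem smootherstep_min_one (r : ℝ) :
    smootherstep (min r 1) = 1 - max (1 - r) 0 ^ 3 * (6 * r ^ 2 + 3 * r + 1) := by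
  rcases le_or_gt r 1 with hr | hr
  · rw [min_eq_left hr, max_eq_left (by linarith), ← one_sub_smootherstep]
    ring
  · rw [min_eq_right hr.le, max_eq_right (by linarith), smootherstep_one]
    ring

theorem contDiff_smootherstep_min_one : ContDiff ℝ 2 fun r => smootherstep (min r 1) := by
  simp_rw [smootherstep_min_one]
  exact contDiff_const.sub
    (((contDiff_max_zero_pow 2).comp (contDiff_const.sub contDiff_id)).mul (by fun_prop))

section Hmap

variable {q : ℕ}

theorem hmap_of_norm_le_one {a : EuclideanSpace ℝ (Fin q)} (ha : ‖a‖ ≤ 1) :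
    hmap q a = (6 * ‖a‖ ^ 4 - 15 * ‖a‖ ^ 3 + 10 * ‖a‖ ^ 2) • a :=
  if_pos ha

theorem hmap_eq_smootherstep_div_norm_smul (a : EuclideanSpace ℝ (Fin q)) :
    hmap q a = (smootherstep (min ‖a‖ 1) / ‖a‖) • a := by
  rcases eq_or_ne a 0 with rfl | ha
  · simp [hmap]
  have hr : ‖a‖ ≠ 0 := norm_ne_zero_iff.2 ha
  rcases le_or_gt ‖a‖ 1 with h | h
  · rw [hmap_of_norm_le_one h, min_eq_left h, smootherstep]
    congr 1
    field_simp
  · rw [hmap, if_neg h.not_ge, min_eq_right h.le, smootherstep_one, one_div]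

theorem norm_hmap (a : EuclideanSpace ℝ (Fin q)) : ‖hmap q a‖ = smootherstep (min ‖a‖ 1) := by
  rcases eq_or_ne a 0 with rfl | ha
  · simp [hmap, smootherstep_zero]
  rw [hmap_eq_smootherstep_div_norm_smul, norm_smul, Real.norm_eq_abs,
    abs_of_nonneg (div_nonneg (smootherstep_nonneg (by positivity)) (norm_nonneg a)),
    div_mul_cancel₀ _ (norm_ne_zero_iff.2 ha)]

theorem norm_hmap_le_one (a : EuclideanSpace ℝ (Fin q)) : ‖hmap q a‖ ≤ 1 :=
  (norm_hmap a).trans_le (smootherstep_le_one (min_le_right _ _))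

theorem norm_hmap_lt_one {a : EuclideanSpace ℝ (Fin q)} (ha : ‖a‖ < 1) : ‖hmap q a‖ < 1 :=
  (norm_hmap a).trans_lt (smootherstep_lt_one (min_lt_of_left_lt ha))

theorem exists_hmap_eq {b : EuclideanSpace ℝ (Fin q)} (hb : ‖b‖ ≤ 1) :
    ∃ a, ‖a‖ ≤ 1 ∧ smootherstep ‖a‖ = ‖b‖ ∧ hmap q a = b := by
  rcases eq_or_ne b 0 with rfl | hb0
  · exact ⟨0, by simp, by simp [smootherstep_zero], by simp [hmap]⟩
  obtain ⟨t, ⟨ht0, ht1⟩, ht⟩ := intermediate_value_Icc zero_le_one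
    continuous_smootherstep.continuousOn
    (by rw [smootherstep_zero, smootherstep_one]; exact ⟨norm_nonneg b, hb⟩)
  have hbn : ‖b‖ ≠ 0 := norm_ne_zero_iff.2 hb0
  have htn : t ≠ 0 := by
    rintro rfl
    exact hbn (ht.symm.trans smootherstep_zero)
  have hna : ‖(t / ‖b‖) • b‖ = t := by
    rw [norm_smul, Real.norm_of_nonneg (by positivity), div_mul_cancel₀ _ hbn]
  refine ⟨(t / ‖b‖) • b, hna.trans_le ht1, hna.symm ▸ ht, ?_⟩
  rw [hmap_eq_smootherstep_div_norm_smul, hna, min_eq_left ht1, ht, smul_smul,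
    div_mul_div_cancel₀ htn, div_self hbn, one_smul]

theorem contDiffAt_hmap_zero : ContDiffAt ℝ 2 (hmap q) 0 := by
  have hsq : ContDiff ℝ 2 fun x : EuclideanSpace ℝ (Fin q) => ‖x‖ ^ 2 := contDiff_norm_sq ℝ
  have hpoly : ContDiff ℝ 2 fun x : EuclideanSpace ℝ (Fin q) =>
      (6 * (‖x‖ ^ 2) ^ 2 + 10 * ‖x‖ ^ 2) • x - (15 : ℝ) • (‖x‖ ^ 3 • x) :=
    (((contDiff_const.mul (hsq.pow 2)).add (contDiff_const.mul hsq)).smul contDiff_id).sub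
      (contDiff_norm_pow_three_smul_self.const_smul (15 : ℝ))
  refine hpoly.contDiffAt.congr_of_eventuallyEq ?_
  filter_upwards [ball_mem_nhds (0 : EuclideanSpace ℝ (Fin q)) one_pos] with x hx
  rw [hmap_of_norm_le_one (mem_ball_zero_iff.1 hx).le, smul_smul, ← sub_smul]
  ring_nf

theorem contDiffAt_hmap_of_ne_zero {a : EuclideanSpace ℝ (Fin q)} (ha : a ≠ 0) :
    ContDiffAt ℝ 2 (hmap q) a := by
  have hnorm : ContDiffAt ℝ 2 (fun x : EuclideanSpace ℝ (Fin q) => ‖x‖) a := contDiffAt_norm ℝ ha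
  rw [funext hmap_eq_smootherstep_div_norm_smul]
  exact ((contDiff_smootherstep_min_one.comp_contDiffAt a hnorm).div hnorm
    (norm_ne_zero_iff.2 ha)).smul contDiffAt_id

theorem surjOn_hmap_closedBall :
    SurjOn (hmap q) (closedBall 0 1) (closedBall 0 1) := fun b hb => by
  obtain ⟨a, ha, -, rfl⟩ := exists_hmap_eq (mem_closedBall_zero_iff.1 hb)
  exact ⟨a, mem_closedBall_zero_iff.2 ha, rfl⟩

theorem surjOn_hmap_ball : SurjOn (hmap q) (ball 0 1) (ball 0 1) := fun b hb => by
  obtain ⟨a, ha, hsa, rfl⟩ := exists_hmap_eq (mem_ball_zero_iff.1 hb).le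
  refine ⟨a, mem_ball_zero_iff.2 (ha.lt_of_ne ?_), rfl⟩
  rintro hone
  rw [hone, smootherstep_one] at hsa
  exact (mem_ball_zero_iff.1 hb).ne hsa.symm

end Hmap

theorem stmt1_general (q : ℕ) :
    ContDiff ℝ 2 (hmap q) ∧
    Set.range (hmap q) = Metric.closedBall (0 : EuclideanSpace ℝ (Fin q)) 1 ∧
    hmap q '' Metric.ball (0 : EuclideanSpace ℝ (Fin q)) 1
      = Metric.ball (0 : EuclideanSpace ℝ (Fin q)) 1 := by
  refine ⟨contDiff_iff_contDiffAt.2 fun a => ?_, ?_, ?_⟩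
  · rcases eq_or_ne a 0 with rfl | ha
    exacts [contDiffAt_hmap_zero, contDiffAt_hmap_of_ne_zero ha]
  · exact (range_subset_iff.2 fun a => mem_closedBall_zero_iff.2 (norm_hmap_le_one a)).antisymm
      surjOn_hmap_closedBall.subset_range
  · exact surjOn_hmap_ball.image_eq_of_mapsTo fun a ha =>
      mem_ball_zero_iff.2 (norm_hmap_lt_one (mem_ball_zero_iff.1 ha))

theorem stmt1 (q : ℕ) (hq : 1 ≤ q) :
    ContDiff ℝ 2 (hmap q) ∧
    Set.range (hmap q) = Metric.closedBall (0 : EuclideanSpace ℝ (Fin q)) 1 ∧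
    hmap q '' Metric.ball (0 : EuclideanSpace ℝ (Fin q)) 1
      = Metric.ball (0 : EuclideanSpace ℝ (Fin q)) 1 :=
  stmt1_general q
end

section
/- Let O ⊆ ℝ^q be open and connected and let u : O → ℝ be lower semicontinuous and locally bounded. Suppose u is a viscosity supersolution of −|Du| = 0 on O, i.e. for every a ∈ O and every C¹ function φ on O such that u − φ attains a local minimum at a, one has Dφ(a) = 0. Then u is constant on O. -/
/-!
Fix `x₀ ∈ O`, a closed ball `B ⊆ O` around it, the minimum `m` of `u` on `B` and an upper bound
`M` of `u` near `x₀`. For `y` near `x₀` and `K` large in terms of `M - m`, a minimiser `z` of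
`x ↦ u x + K‖x - y‖²` over `B` is forced into the interior of `B`, so `-K‖· - y‖²` is a test
function touching `u` from below at `z`; the supersolution property gives `2K(z - y) = 0`, i.e.
`z = y`. Hence `u y ≤ u x + K‖x - y‖²` near `x₀` with `K` uniform in `y`, and exchanging `x` and
`y` gives `|u x - u y| ≤ K‖x - y‖²`. So `u` is differentiable on `O` with zero derivative, and
`O` is connected.
-/

open Metric Set Filter Topology

def IsViscositySupersolutionNegNormGrad {E : Type*} [NormedAddCommGroup E] [NormedSpace ℝ E]
    (O : Set E) (u : E → ℝ) : Prop :=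
  ∀ a ∈ O, ∀ φ : E → ℝ, ContDiff ℝ 1 φ → IsLocalMinOn (fun x => u x - φ x) O a → fderiv ℝ φ a = 0

namespace IsViscositySupersolutionNegNormGrad

variable {E : Type*} [NormedAddCommGroup E] [InnerProductSpace ℝ E] {O : Set E} {u : E → ℝ}

theorem eq_of_isLocalMin_add_mul_norm_sub_sq (hu : IsViscositySupersolutionNegNormGrad O u)
    {K : ℝ} (hK : K ≠ 0) {y z : E} (hz : z ∈ O)
    (hmin : IsLocalMin (fun x => u x + K * ‖x - y‖ ^ 2) z) : z = y := by
  have hφ : HasFDerivAt (fun x => -(K * ‖x - y‖ ^ 2))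
      (-(K • 2 • (innerSL ℝ (z - y)).comp (ContinuousLinearMap.id ℝ E))) z :=
    (((hasFDerivAt_id z).sub_const y).norm_sq.const_mul K).neg
  have hD := hu z hz (fun x => -(K * ‖x - y‖ ^ 2))
    (contDiff_const.mul ((contDiff_id.sub contDiff_const).norm_sq ℝ)).neg <| by
    simpa only [sub_neg_eq_add] using hmin.on O
  rw [hφ.fderiv] at hD
  -- the gradient `-2K⟪z - y, ·⟫` evaluated at `z - y` is `-2K‖z - y‖²`
  have h := congrArg (· (z - y)) hD
  simp only [neg_apply, smul_apply, ContinuousLinearMap.comp_id, innerSL_apply_apply,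
    real_inner_self_eq_norm_sq, zero_apply] at h
  simpa [hK, sub_eq_zero] using h

theorem le_add_mul_norm_sub_sq (hu : IsViscositySupersolutionNegNormGrad O u) {s : Set E}
    (hs : IsCompact s) (hsO : s ⊆ O) (hlsc : LowerSemicontinuousOn u s) {m K δ : ℝ}
    (hm : ∀ x ∈ s, m ≤ u x) (hK : 0 < K) {y : E} (hδ : 0 < δ) (hball : ball y δ ⊆ s)
    (hyδ : u y - m < K * δ ^ 2) : ∀ x ∈ s, u y ≤ u x + K * ‖x - y‖ ^ 2 := by
  have hys : y ∈ s := hball (mem_ball_self hδ)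
  have hpen : Continuous fun x => K * ‖x - y‖ ^ 2 := by fun_prop
  obtain ⟨z, hzs, hzmin⟩ := (hlsc.add hpen.continuousOn.lowerSemicontinuousOn).exists_isMinOn
    ⟨y, hys⟩ hs
  have hzy : u z + K * ‖z - y‖ ^ 2 ≤ u y := by simpa using isMinOn_iff.mp hzmin y hys
  have hz_ball : z ∈ ball y δ := by
    have : K * ‖z - y‖ ^ 2 < K * δ ^ 2 := by linarith [hm z hzs]
    rw [mem_ball, dist_eq_norm]
    exact (pow_lt_pow_iff_left₀ (norm_nonneg _) hδ.le two_ne_zero).mp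
      (lt_of_mul_lt_mul_left this hK.le)
  have hloc : IsLocalMin (fun x => u x + K * ‖x - y‖ ^ 2) z :=
    hzmin.isLocalMin (mem_of_superset (isOpen_ball.mem_nhds hz_ball) hball)
  obtain rfl := hu.eq_of_isLocalMin_add_mul_norm_sub_sq hK.ne' (hsO hzs) hloc
  simpa using isMinOn_iff.mp hzmin

theorem exists_forall_le_add_mul_norm_sub_sq [ProperSpace E]
    (hu : IsViscositySupersolutionNegNormGrad O u) (hO : IsOpen O)
    (hlsc : LowerSemicontinuousOn u O) {x₀ : E} (hx₀ : x₀ ∈ O) {M : ℝ}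
    (hM : ∀ᶠ x in 𝓝 x₀, u x ≤ M) :
    ∃ K, ∃ ρ > 0, ∀ y ∈ ball x₀ ρ, ∀ x ∈ ball x₀ ρ, u y ≤ u x + K * ‖x - y‖ ^ 2 := by
  obtain ⟨r, hr, hB⟩ := nhds_basis_closedBall.mem_iff.mp (hO.mem_nhds hx₀)
  obtain ⟨ρ₀, hρ₀, hMρ₀⟩ := eventually_nhds_iff_ball.mp hM
  obtain ⟨xm, -, hxm⟩ := (hlsc.mono hB).exists_isMinOn ⟨x₀, mem_closedBall_self hr.le⟩
    (isCompact_closedBall x₀ r)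
  set m := u xm
  have hm : ∀ x ∈ closedBall x₀ r, m ≤ u x := isMinOn_iff.mp hxm
  -- `K` is chosen so that the penalty exceeds `M - m` outside `ball y (r / 2)`.
  refine ⟨(M - m + 1) / (r / 2) ^ 2, min ρ₀ (r / 2), by positivity, fun y hy x hx => ?_⟩
  have hyρ₀ : y ∈ ball x₀ ρ₀ := ball_subset_ball (min_le_left _ _) hy
  have hyr : dist y x₀ < r / 2 := lt_of_lt_of_le hy (min_le_right _ _)
  have hsub : ball x₀ (min ρ₀ (r / 2)) ⊆ closedBall x₀ r :=
    (ball_subset_ball (by linarith [min_le_right ρ₀ (r / 2)])).trans ball_subset_closedBall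
  have hmM : m ≤ M := (hm y (hsub hy)).trans (hMρ₀ y hyρ₀)
  have hKr : (M - m + 1) / (r / 2) ^ 2 * (r / 2) ^ 2 = M - m + 1 := by field_simp
  refine hu.le_add_mul_norm_sub_sq (isCompact_closedBall x₀ r) hB (hlsc.mono hB) hm
    (by positivity) (half_pos hr) ((ball_subset_ball' (by linarith)).trans ball_subset_closedBall)
    ?_ x (hsub hx)
  linarith [hMρ₀ y hyρ₀]

theorem hasFDerivAt_zero [ProperSpace E] (hu : IsViscositySupersolutionNegNormGrad O u)
    (hO : IsOpen O) (hlsc : LowerSemicontinuousOn u O) {y : E} (hy : y ∈ O) {M : ℝ}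
    (hM : ∀ᶠ x in 𝓝 y, u x ≤ M) : HasFDerivAt u (0 : E →L[ℝ] ℝ) y := by
  obtain ⟨K, ρ, hρ, hK⟩ := hu.exists_forall_le_add_mul_norm_sub_sq hO hlsc hy hM
  have hquad : (fun x => u x - u y) =O[𝓝 y] fun x => ‖x - y‖ ^ 2 := by
    refine Asymptotics.IsBigO.of_bound K ?_
    filter_upwards [ball_mem_nhds y hρ] with x hx
    have h₁ := hK y (mem_ball_self hρ) x hx
    have h₂ := hK x hx y (mem_ball_self hρ)
    rw [norm_sub_rev] at h₂
    rw [Real.norm_eq_abs, norm_pow, norm_norm, abs_sub_le_iff]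
    constructor <;> linarith
  exact (hasFDerivAt_sub_const_iff (u y)).mp (hquad.hasFDerivAt one_lt_two)

end IsViscositySupersolutionNegNormGrad

/-- A lower semicontinuous, locally bounded viscosity supersolution of `−|Du| = 0` on an open
connected set is constant. -/
theorem stmt8 {q : ℕ} (O : Set (EuclideanSpace ℝ (Fin q)))
    (hO : IsOpen O) (hconn : IsConnected O)
    (u : EuclideanSpace ℝ (Fin q) → ℝ)
    (hlsc : LowerSemicontinuousOn u O)
    (hbdd : ∀ a ∈ O, ∃ M : ℝ, ∀ᶠ x in nhds a, |u x| ≤ M)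
    (hvisc : ∀ a ∈ O, ∀ φ : EuclideanSpace ℝ (Fin q) → ℝ, ContDiff ℝ 1 φ →
      IsLocalMinOn (fun x => u x - φ x) O a → fderiv ℝ φ a = 0) :
    ∀ a ∈ O, ∀ b ∈ O, u a = u b := by
  have hu : IsViscositySupersolutionNegNormGrad O u := hvisc
  have hderiv : ∀ y ∈ O, HasFDerivAt u 0 y := fun y hy => by
    obtain ⟨M, hM⟩ := hbdd y hy
    exact hu.hasFDerivAt_zero hO hlsc hy (hM.mono fun x hx => (abs_le.mp hx).2)
  intro a ha b hb
  exact hO.is_const_of_fderiv_eq_zero hconn.isPreconnected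
    (fun y hy => (hderiv y hy).differentiableAt.differentiableWithinAt)
    (fun y hy => (hderiv y hy).fderiv) ha hb
end

section
/- Let E ⊆ ℝ^k, A compact, β : ℝ^d × A × E → ℝ^d with |β(x,a,e)| ≤ C(1+|x|)(1 ∧ |e|), and λ(a,·) measures on E. Fix (t,x) and δ > 0, and let ψ, φ ∈ C^{1,2}([0,T]×ℝ^d) coincide on a neighborhood of (t,x) with the same value, time derivative, and spatial gradient at (t,x). Suppose further that for every ε > 0, sup_{a∈A} ∫_{E∩{|e|≤δ}} (1 ∧ |e|² ∧ ε) λ(a,de) → 0 as ε → 0⁺, and let ψ_ε = χ_ε ψ + (1−χ_ε) φ with χ_ε a cutoff equal to 1 on the ε-ball around (t,x) and 0 outside the 2ε-ball. Then sup_{a∈A} | I¹_a(t,x,ψ_ε) − I¹_a(t,x,φ) | → 0 as ε → 0⁺, where I¹_a(t,x,φ) = ∫_{E∩{|e|≤δ}} ( φ(t, x+β(x,a,e)) − φ(t,x) − β(x,a,e)·D_xφ(t,x) ) λ(a,de). -/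
/-!
Write `ψ_ε = φ + g_ε` with `g_ε = χ_ε h` and `h = ψ - φ`. Since `h` has vanishing value and
derivative at `(t, x)`, so does `g_ε`, and `I¹_a(ψ_ε) - I¹_a(φ) = ∫ g_ε(t, x + β(x,a,e)) λ(a,de)`.
By Taylor's formula `|h(p)| ≤ K |p - (t, x)|²` near `(t, x)`, and `g_ε` vanishes outside the
`2ε`-ball, so the integrand is at most `K min(|β|², 4ε²) ≤ K (R² + 1) min(1 ∧ |e|², 4ε²)` with
`R = C (1 + |x|)`. The hypothesis on `λ` at level `4ε²` makes this integral uniformly small.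
-/

open MeasureTheory

/-- The small-jump part `I¹_a` of the nonlocal operator, for a test function `f`. -/
noncomputable def I1 {d k : ℕ} {A : Type*}
    (μ : A → Measure (EuclideanSpace ℝ (Fin k)))
    (Eset : Set (EuclideanSpace ℝ (Fin k))) (δ : ℝ)
    (β : EuclideanSpace ℝ (Fin d) → A → EuclideanSpace ℝ (Fin k) → EuclideanSpace ℝ (Fin d))
    (t : ℝ) (x : EuclideanSpace ℝ (Fin d))
    (f : ℝ × EuclideanSpace ℝ (Fin d) → ℝ) (a : A) : ℝ :=
  ∫ e in Eset ∩ {e | ‖e‖ ≤ δ},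
    (f (t, x + β x a e) - f (t, x) - fderiv ℝ (fun y => f (t, y)) x (β x a e)) ∂μ a

open Topology Metric

section Taylor

variable {E F : Type*} [NormedAddCommGroup E] [NormedSpace ℝ E]
  [NormedAddCommGroup F] [NormedSpace ℝ F]

noncomputable def taylorRemainder (f : E → F) (x b : E) : F :=
  f (x + b) - f x - fderiv ℝ f x b

theorem taylorRemainder_add {f g : E → F} {x : E} (hf : DifferentiableAt ℝ f x)
    (hg : DifferentiableAt ℝ g x) (b : E) :
    taylorRemainder (fun y => f y + g y) x b = taylorRemainder f x b + taylorRemainder g x b := by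
  simp only [taylorRemainder, fderiv_fun_add hf hg, FunLike.coe_add, Pi.add_apply]
  abel

theorem taylorRemainder_of_hasFDerivAt_zero {f : E → F} {x : E}
    (hf : HasFDerivAt f (0 : E →L[ℝ] F) x) (hx : f x = 0) (b : E) : taylorRemainder f x b = f (x + b) := by
  simp [taylorRemainder, hf.fderiv, hx]

theorem ContDiff.exists_norm_taylorRemainder_le [ProperSpace E] {f : E → F}
    (hf : ContDiff ℝ 2 f) (x : E) (R : ℝ) :
    ∃ K > 0, ∀ b : E, ‖b‖ ≤ R → ‖taylorRemainder f x b‖ ≤ K * ‖b‖ ^ 2 := by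
  have hf' : ContDiff ℝ 1 (fderiv ℝ f) := hf.fderiv_right le_rfl
  obtain ⟨L, hL⟩ := (isCompact_closedBall x R).exists_bound_of_continuousOn
    (hf'.continuous_fderiv one_ne_zero).continuousOn
  refine ⟨max L 1, by positivity, fun b hb => ?_⟩
  have hlip : ∀ z ∈ closedBall x ‖b‖, ‖fderiv ℝ f z - fderiv ℝ f x‖ ≤ max L 1 * ‖b‖ := by
    intro z hz
    have hzR : z ∈ closedBall x R := closedBall_subset_closedBall hb hz
    calc ‖fderiv ℝ f z - fderiv ℝ f x‖ ≤ max L 1 * ‖z - x‖ :=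
          (convex_closedBall x R).norm_image_sub_le_of_norm_fderiv_le
            (fun w _ => hf'.differentiable one_ne_zero w)
            (fun w hw => (hL w hw).trans (le_max_left _ _))
            (mem_closedBall_self ((norm_nonneg b).trans hb)) hzR
      _ ≤ max L 1 * ‖b‖ := by
          gcongr
          simpa [dist_eq_norm] using hz
  have := (convex_closedBall x ‖b‖).norm_image_sub_le_of_norm_hasFDerivWithin_le'
    (fun w _ => (hf.differentiable two_ne_zero w).hasFDerivAt.hasFDerivWithinAt) hlip
    (mem_closedBall_self (norm_nonneg b)) (by simp : x + b ∈ closedBall x ‖b‖)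
  simpa [taylorRemainder, sq, mul_assoc] using this

theorem ContDiff.integrableOn_taylorRemainder_comp [ProperSpace E] [MeasurableSpace E]
    [OpensMeasurableSpace E] {X : Type*} [MeasurableSpace X] {ν : Measure X} {S : Set X} {f : E → F}
    (hf : ContDiff ℝ 2 f) (x : E) {b : X → E} (hb : Measurable b) {R : ℝ}
    (hbR : ∀ e, ‖b e‖ ≤ R) {w : X → ℝ} (hw : IntegrableOn w S ν)
    (hbw : ∀ e, ‖b e‖ ^ 2 ≤ w e) :
    IntegrableOn (fun e => taylorRemainder f x (b e)) S ν := by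
  obtain ⟨K, hK, hKf⟩ := hf.exists_norm_taylorRemainder_le x R
  have hcont : Continuous (taylorRemainder f x) := by
    unfold taylorRemainder
    have := hf.continuous
    fun_prop
  refine (hw.const_mul K).mono' (hcont.comp_aestronglyMeasurable hb.aestronglyMeasurable) ?_
  exact ae_of_all _ fun e => (hKf (b e) (hbR e)).trans (by gcongr; exact hbw e)

theorem hasFDerivAt_sub_zero_of_fderiv_eq {f g : E → F} {p : E} (hf : DifferentiableAt ℝ f p)
    (hg : DifferentiableAt ℝ g p) (hfg : fderiv ℝ f p = fderiv ℝ g p) :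
    HasFDerivAt (fun q => f q - g q) (0 : E →L[ℝ] F) p := by
  simpa [hfg] using hf.hasFDerivAt.fun_sub hg.hasFDerivAt

theorem HasFDerivAt.mul_of_eq_zero {χ h : E → ℝ} {p : E} (hχ : DifferentiableAt ℝ χ p)
    (hh : HasFDerivAt h (0 : E →L[ℝ] ℝ) p) (hp : h p = 0) :
    HasFDerivAt (fun q => χ q * h q) (0 : E →L[ℝ] ℝ) p := by
  simpa [hp] using hχ.hasFDerivAt.fun_mul hh

end Taylor

theorem abs_mul_le_mul_min_sq_of_cutoff {X : Type*} [SeminormedAddCommGroup X]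
    {χ h : X → ℝ} {x : X} {K r : ℝ} (hK : 0 ≤ K) (hχ : ∀ y, |χ y| ≤ 1)
    (hχ0 : ∀ b, r ≤ ‖b‖ → χ (x + b) = 0) (hh : ∀ b, ‖b‖ ≤ r → |h (x + b)| ≤ K * ‖b‖ ^ 2)
    (b : X) : |χ (x + b) * h (x + b)| ≤ K * min (‖b‖ ^ 2) (r ^ 2) := by
  rcases le_or_gt r ‖b‖ with hb | hb
  · rw [hχ0 b hb, zero_mul, abs_zero]
    have : 0 ≤ r ^ 2 := sq_nonneg r
    positivity
  · have hbr : ‖b‖ ^ 2 ≤ r ^ 2 := pow_le_pow_left₀ (norm_nonneg b) hb.le 2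
    calc |χ (x + b) * h (x + b)| ≤ 1 * (K * ‖b‖ ^ 2) := by
          rw [abs_mul]
          exact mul_le_mul (hχ _) (hh b hb.le) (abs_nonneg _) zero_le_one
      _ = K * min (‖b‖ ^ 2) (r ^ 2) := by rw [one_mul, min_eq_left hbr]

section SmallJumps

variable {d k : ℕ} {A : Type*} (μ : A → Measure (EuclideanSpace ℝ (Fin k)))
  (Eset : Set (EuclideanSpace ℝ (Fin k))) (δ : ℝ)
  (β : EuclideanSpace ℝ (Fin d) → A → EuclideanSpace ℝ (Fin k) → EuclideanSpace ℝ (Fin d))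
  (t : ℝ) (x : EuclideanSpace ℝ (Fin d))

theorem I1_eq_integral_taylorRemainder (f : ℝ × EuclideanSpace ℝ (Fin d) → ℝ) (a : A) :
    I1 μ Eset δ β t x f a =
      ∫ e in Eset ∩ {e | ‖e‖ ≤ δ}, taylorRemainder (fun y => f (t, y)) x (β x a e) ∂μ a :=
  rfl

theorem I1_add {f g : ℝ × EuclideanSpace ℝ (Fin d) → ℝ} {a : A} (hf : ContDiff ℝ 2 f)
    (hg : ContDiff ℝ 2 g) (hβ : Measurable (β x a)) {R : ℝ} (hβR : ∀ e, ‖β x a e‖ ≤ R)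
    {w : EuclideanSpace ℝ (Fin k) → ℝ} (hw : IntegrableOn w (Eset ∩ {e | ‖e‖ ≤ δ}) (μ a))
    (hβw : ∀ e, ‖β x a e‖ ^ 2 ≤ w e) :
    I1 μ Eset δ β t x (fun p => f p + g p) a =
      I1 μ Eset δ β t x f a + I1 μ Eset δ β t x g a := by
  have hsec : ∀ {u : ℝ × EuclideanSpace ℝ (Fin d) → ℝ}, ContDiff ℝ 2 u →
      ContDiff ℝ 2 (fun y => u (t, y)) :=
    fun hu => hu.comp (contDiff_const.prodMk contDiff_id)
  simp only [I1_eq_integral_taylorRemainder, taylorRemainder_add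
    ((hsec hf).differentiable two_ne_zero x) ((hsec hg).differentiable two_ne_zero x)]
  exact integral_add ((hsec hf).integrableOn_taylorRemainder_comp x hβ hβR hw hβw)
    ((hsec hg).integrableOn_taylorRemainder_comp x hβ hβR hw hβw)

theorem I1_eq_integral_of_hasFDerivAt_zero {g : ℝ × EuclideanSpace ℝ (Fin d) → ℝ}
    (hg : HasFDerivAt g (0 : ℝ × EuclideanSpace ℝ (Fin d) →L[ℝ] ℝ) (t, x)) (hgx : g (t, x) = 0)
    (a : A) :
    I1 μ Eset δ β t x g a = ∫ e in Eset ∩ {e | ‖e‖ ≤ δ}, g (t, x + β x a e) ∂μ a := by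
  have hsec : HasFDerivAt (fun y => g (t, y)) (0 : EuclideanSpace ℝ (Fin d) →L[ℝ] ℝ) x := by
    have := hg.comp x (hasFDerivAt_prodMk_right t x)
    rwa [ContinuousLinearMap.zero_comp] at this
  simp only [I1_eq_integral_taylorRemainder, taylorRemainder_of_hasFDerivAt_zero hsec hgx]

theorem abs_I1_add_mul_sub_I1_le {φ χ h : ℝ × EuclideanSpace ℝ (Fin d) → ℝ} {a : A} {K r R : ℝ}
    (hφ : ContDiff ℝ 2 φ) (hχ : ContDiff ℝ 2 χ) (hh : ContDiff ℝ 2 h) (hhx : h (t, x) = 0)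
    (hh' : HasFDerivAt h (0 : ℝ × EuclideanSpace ℝ (Fin d) →L[ℝ] ℝ) (t, x)) (hK : 0 ≤ K)
    (hχ1 : ∀ p, |χ p| ≤ 1) (hχ0 : ∀ b, r ≤ ‖b‖ → χ ((t, x) + b) = 0)
    (hhK : ∀ b, ‖b‖ ≤ r → |h ((t, x) + b)| ≤ K * ‖b‖ ^ 2)
    (hβ : Measurable (β x a)) (hβR : ∀ e, ‖β x a e‖ ≤ R)
    {w v : EuclideanSpace ℝ (Fin k) → ℝ} (hw : IntegrableOn w (Eset ∩ {e | ‖e‖ ≤ δ}) (μ a))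
    (hβw : ∀ e, ‖β x a e‖ ^ 2 ≤ w e) (hv : IntegrableOn v (Eset ∩ {e | ‖e‖ ≤ δ}) (μ a))
    (hβv : ∀ e, min (‖β x a e‖ ^ 2) (r ^ 2) ≤ v e) :
    |I1 μ Eset δ β t x (fun p => φ p + χ p * h p) a - I1 μ Eset δ β t x φ a|
      ≤ K * ∫ e in Eset ∩ {e | ‖e‖ ≤ δ}, v e ∂μ a := by
  have hg' := hh'.mul_of_eq_zero (hχ.differentiable two_ne_zero _) hhx
  rw [I1_add μ Eset δ β t x hφ (hχ.mul hh) hβ hβR hw hβw, add_sub_cancel_left,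
    I1_eq_integral_of_hasFDerivAt_zero μ Eset δ β t x hg' (by simp [hhx]),
    ← integral_const_mul, ← Real.norm_eq_abs]
  refine norm_integral_le_of_norm_le (hv.const_mul K) (ae_of_all _ fun e => ?_)
  have hcut := abs_mul_le_mul_min_sq_of_cutoff hK hχ1 hχ0 hhK (0, β x a e)
  rw [Prod.mk_add_mk, add_zero, Prod.norm_mk, norm_zero, max_eq_right (norm_nonneg _)] at hcut
  rw [Real.norm_eq_abs]
  exact hcut.trans (by gcongr; exact hβv e)

end SmallJumps

theorem IntegrableOn.min_const_of_nonneg {X : Type*} [MeasurableSpace X] {ν : Measure X}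
    {S : Set X} {f : X → ℝ} (hf : IntegrableOn f S ν) (hf0 : ∀ e, 0 ≤ f e) {c : ℝ} (hc : 0 ≤ c) :
    IntegrableOn (fun e => min (f e) c) S ν :=
  hf.mono' (hf.aestronglyMeasurable.inf aestronglyMeasurable_const) (ae_of_all _ fun e => by
    rw [Real.norm_eq_abs, abs_of_nonneg (le_min (hf0 e) hc)]
    exact min_le_left _ _)

theorem sq_le_sq_mul_min_one_sq {r R ρ : ℝ} (hr : 0 ≤ r) (hρ : 0 ≤ ρ) (h : r ≤ R * min 1 ρ) :
    r ^ 2 ≤ R ^ 2 * min 1 (ρ ^ 2) := by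
  have hmin : min 1 ρ ^ 2 = min 1 (ρ ^ 2) := by
    rcases le_total 1 ρ with hρ1 | hρ1
    · rw [min_eq_left hρ1, min_eq_left (one_le_pow₀ hρ1), one_pow]
    · rw [min_eq_right hρ1, min_eq_right (pow_le_one₀ hρ hρ1)]
  calc r ^ 2 ≤ (R * min 1 ρ) ^ 2 := pow_le_pow_left₀ hr h 2
    _ = R ^ 2 * min 1 (ρ ^ 2) := by rw [mul_pow, hmin]

theorem min_le_sq_add_one_mul_min {u s η R : ℝ} (hs : 0 ≤ s) (hη : 0 ≤ η) (hu : u ≤ R ^ 2 * s) :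
    min u η ≤ (R ^ 2 + 1) * min s η := by
  rw [mul_min_of_nonneg _ _ (by positivity)]
  exact min_le_min (hu.trans (by gcongr; linarith))
    (le_mul_of_one_le_left hη (by linarith [sq_nonneg R]))

theorem exists_pos_forall_le_of_le_mul_sq {ι : Type*} {F G : ℝ → ι → ℝ} {L : ℝ} (hL : 0 < L)
    (hF : ∀ c > (0 : ℝ), ∃ η₀ > (0 : ℝ), ∀ η : ℝ, 0 < η → η ≤ η₀ → ∀ i, F η i ≤ c)
    (hG : ∀ ε : ℝ, 0 < ε → 2 * ε ≤ 1 → ∀ i, G ε i ≤ L * F ((2 * ε) ^ 2) i) :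
    ∀ c > (0 : ℝ), ∃ ε₀ > (0 : ℝ), ∀ ε : ℝ, 0 < ε → ε ≤ ε₀ → ∀ i, G ε i ≤ c := by
  intro c hc
  obtain ⟨η, hη, hFη⟩ := hF (c / L) (by positivity)
  have hsmall : ∀ᶠ ε in 𝓝 (0 : ℝ), 2 * ε < 1 ∧ (2 * ε) ^ 2 < η :=
    ((by fun_prop : Continuous fun ε : ℝ => 2 * ε).continuousAt.eventually_lt
      continuousAt_const (by norm_num)).and
    ((by fun_prop : Continuous fun ε : ℝ => (2 * ε) ^ 2).continuousAt.eventually_lt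
      continuousAt_const (by simpa using hη))
  obtain ⟨ε₀, hε₀, hε₀small⟩ := (nhdsGT_basis_Ioc 0).eventually_iff.1 (nhdsWithin_le_nhds hsmall)
  refine ⟨ε₀, hε₀, fun ε hε hεε₀ i => ?_⟩
  obtain ⟨hε1, hεη⟩ := hε₀small ⟨hε, hεε₀⟩
  calc G ε i ≤ L * F ((2 * ε) ^ 2) i := hG ε hε hε1.le i
    _ ≤ L * (c / L) := by
        gcongr
        exact hFη _ (by positivity) hεη.le i
    _ = c := mul_div_cancel₀ c hL.ne'

theorem stmt14_general {d k : ℕ} {A : Type*} (C δ : ℝ) (hC : 0 < C)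
    (Eset : Set (EuclideanSpace ℝ (Fin k)))
    (μ : A → Measure (EuclideanSpace ℝ (Fin k)))
    (β : EuclideanSpace ℝ (Fin d) → A → EuclideanSpace ℝ (Fin k) → EuclideanSpace ℝ (Fin d))
    (hβbound : ∀ x a e, ‖β x a e‖ ≤ C * (1 + ‖x‖) * min 1 ‖e‖)
    (hβmeas : ∀ x a, Measurable (β x a))
    (hint : ∀ a : A, IntegrableOn (fun e => min 1 (‖e‖ ^ 2)) Eset (μ a))
    (hlam : ∀ c > (0 : ℝ), ∃ ε₀ > (0 : ℝ), ∀ ε : ℝ, 0 < ε → ε ≤ ε₀ → ∀ a : A,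
      ∫ e in Eset ∩ {e | ‖e‖ ≤ δ}, min (min 1 (‖e‖ ^ 2)) ε ∂μ a ≤ c)
    (t : ℝ) (x : EuclideanSpace ℝ (Fin d))
    (ψ φ : ℝ × EuclideanSpace ℝ (Fin d) → ℝ)
    (hψ : ContDiff ℝ 2 ψ) (hφ : ContDiff ℝ 2 φ)
    (hval : ψ (t, x) = φ (t, x))
    (hjet : fderiv ℝ ψ (t, x) = fderiv ℝ φ (t, x))
    (χ : ℝ → ℝ × EuclideanSpace ℝ (Fin d) → ℝ)
    (hχ : ∀ ε : ℝ, 0 < ε → ContDiff ℝ 2 (χ ε) ∧ (∀ p, χ ε p ∈ Set.Icc (0 : ℝ) 1) ∧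
      (∀ p ∈ Metric.ball (t, x) ε, χ ε p = 1) ∧
      (∀ p ∉ Metric.ball (t, x) (2 * ε), χ ε p = 0)) :
    ∀ c > (0 : ℝ), ∃ ε₀ > (0 : ℝ), ∀ ε : ℝ, 0 < ε → ε ≤ ε₀ → ∀ a : A,
      |I1 μ Eset δ β t x (fun p => χ ε p * ψ p + (1 - χ ε p) * φ p) a
        - I1 μ Eset δ β t x φ a| ≤ c := by
  set s : EuclideanSpace ℝ (Fin k) → ℝ := fun e => min 1 (‖e‖ ^ 2)
  set R := C * (1 + ‖x‖)
  set h := fun p => ψ p - φ p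
  have hh' : HasFDerivAt h (0 : ℝ × EuclideanSpace ℝ (Fin d) →L[ℝ] ℝ) (t, x) :=
    hasFDerivAt_sub_zero_of_fderiv_eq (hψ.differentiable two_ne_zero _)
      (hφ.differentiable two_ne_zero _) hjet
  have hh : ContDiff ℝ 2 h := hψ.sub hφ
  have hhx : h (t, x) = 0 := sub_eq_zero.2 hval
  obtain ⟨K, hK, hhK⟩ := hh.exists_norm_taylorRemainder_le (t, x) 1
  simp only [taylorRemainder_of_hasFDerivAt_zero hh' hhx, Real.norm_eq_abs] at hhK
  have hs : ∀ a, IntegrableOn s (Eset ∩ {e | ‖e‖ ≤ δ}) (μ a) := fun a =>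
    (hint a).mono_set Set.inter_subset_left
  have hβs : ∀ a e, ‖β x a e‖ ^ 2 ≤ R ^ 2 * s e := fun a e =>
    sq_le_sq_mul_min_one_sq (norm_nonneg _) (norm_nonneg _) (hβbound x a e)
  refine exists_pos_forall_le_of_le_mul_sq (by positivity : 0 < K * (R ^ 2 + 1)) hlam
    fun ε hε hε1 a => ?_
  obtain ⟨hχC, hχ01, -, hχ0⟩ := hχ ε hε
  have hglue : (fun p => χ ε p * ψ p + (1 - χ ε p) * φ p) = fun p => φ p + χ ε p * h p := by
    funext p; ring
  rw [hglue, mul_assoc, ← integral_const_mul]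
  exact abs_I1_add_mul_sub_I1_le μ Eset δ β t x hφ hχC hh hhx hh' hK.le
    (fun p => abs_le.2 ⟨by linarith [(hχ01 p).1], (hχ01 p).2⟩)
    (fun b hb => hχ0 _ (by simpa [dist_eq_norm] using hb)) (fun b hb => hhK b (hb.trans hε1))
    (hβmeas x a)
    (fun e => (hβbound x a e).trans (mul_le_of_le_one_right (by positivity) (min_le_left _ _)))
    ((hs a).const_mul (R ^ 2)) (hβs a)
    ((IntegrableOn.min_const_of_nonneg (hs a) (fun e => by positivity) (by positivity)).const_mul _)
    (fun e => min_le_sq_add_one_mul_min (by positivity) (by positivity) (hβs a e))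

/-- Uniform convergence of the small-jump nonlocal terms of the glued test functions
`ψ_ε = χ_ε ψ + (1 − χ_ε) φ` to the one of `φ`, as `ε → 0⁺`. -/
theorem stmt14 {d k : ℕ} {A : Type*} (C δ : ℝ) (hC : 0 < C) (hδ : 0 < δ)
    (Eset : Set (EuclideanSpace ℝ (Fin k)))
    (μ : A → Measure (EuclideanSpace ℝ (Fin k)))
    (β : EuclideanSpace ℝ (Fin d) → A → EuclideanSpace ℝ (Fin k) → EuclideanSpace ℝ (Fin d))
    (hβbound : ∀ x a e, ‖β x a e‖ ≤ C * (1 + ‖x‖) * min 1 ‖e‖)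
    (hβmeas : ∀ x a, Measurable (β x a))
    (hint : ∀ a : A, IntegrableOn (fun e => min 1 (‖e‖ ^ 2)) Eset (μ a))
    (hlam : ∀ c > (0 : ℝ), ∃ ε₀ > (0 : ℝ), ∀ ε : ℝ, 0 < ε → ε ≤ ε₀ → ∀ a : A,
      ∫ e in Eset ∩ {e | ‖e‖ ≤ δ}, min (min 1 (‖e‖ ^ 2)) ε ∂μ a ≤ c)
    (t : ℝ) (x : EuclideanSpace ℝ (Fin d))
    (ψ φ : ℝ × EuclideanSpace ℝ (Fin d) → ℝ)
    (hψ : ContDiff ℝ 2 ψ) (hφ : ContDiff ℝ 2 φ)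
    (hval : ψ (t, x) = φ (t, x))
    (hjet : fderiv ℝ ψ (t, x) = fderiv ℝ φ (t, x))
    (χ : ℝ → ℝ × EuclideanSpace ℝ (Fin d) → ℝ)
    (hχ : ∀ ε : ℝ, 0 < ε → ContDiff ℝ 2 (χ ε) ∧ (∀ p, χ ε p ∈ Set.Icc (0 : ℝ) 1) ∧
      (∀ p ∈ Metric.ball (t, x) ε, χ ε p = 1) ∧
      (∀ p ∉ Metric.ball (t, x) (2 * ε), χ ε p = 0)) :
    ∀ c > (0 : ℝ), ∃ ε₀ > (0 : ℝ), ∀ ε : ℝ, 0 < ε → ε ≤ ε₀ → ∀ a : A,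
      |I1 μ Eset δ β t x (fun p => χ ε p * ψ p + (1 - χ ε p) * φ p) a
        - I1 μ Eset δ β t x φ a| ≤ c :=
  stmt14_general C δ hC Eset μ β hβbound hβmeas hint hlam t x ψ φ hψ hφ hval hjet χ hχ
end
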